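/- Every formula of hypergraph graded modal logic (HGML) can be translated into an equivalent formula of the restricted fragment HGML_r: for every HGML formula φ(x) over a vocabulary of relation types R with arities and node colors C, there exists an HGML_r formula φ'(x) such that for every relational hypergraph G over this vocabulary and every node v of G, G ⊨ φ(v) if and only if G ⊨ φ'(v). -/

import Mathlib

structure RelHG (V R : Type) (ar : R → ℕ) where
  edges : Finset (Σ r : R, Fin (ar r) → V)

mutual
/-- Formulas of hypergraph graded modal logic (HGML) over relation types `R` with
arities `ar` and node colors `C`.  `count r i N hN Ψ` is the formula
`∃^{≥N} ỹ (r(y₁,…,y_{i-1},x,y_{i+1},…,y_{ar r}) ∧ Ψ(ỹ))` where `N ≥ 1`. -/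
inductive HGML (R C : Type) (ar : R → ℕ) : Type where
  | color : C → HGML R C ar
  | fnot : HGML R C ar → HGML R C ar
  | fand : HGML R C ar → HGML R C ar → HGML R C ar
  | count : (r : R) → (i : Fin (ar r)) → (N : ℕ) → 1 ≤ N →
      BComb R C ar (ar r) i → HGML R C ar

/-- Boolean combinations of HGML formulas whose free variables range over the
positions `j ≠ i` of a relation of arity `k` (the tuple `ỹ`). -/
inductive BComb (R C : Type) (ar : R → ℕ) : (k : ℕ) → Fin k → Type where
  | atom : {k : ℕ} → {i : Fin k} → (j : Fin k) → j ≠ i → HGML R C ar → BComb R C ar k i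
  | bnot : {k : ℕ} → {i : Fin k} → BComb R C ar k i → BComb R C ar k i
  | band : {k : ℕ} → {i : Fin k} → BComb R C ar k i → BComb R C ar k i →
      BComb R C ar k i
end

variable {V R C : Type} {ar : R → ℕ}

mutual
/-- Satisfaction `G ⊨ φ(v)` of an HGML formula at a node of a relational
hypergraph `H` with node coloring `c`.  In the counting case we count full tuples
`w : Fin (ar r) → V` with `w i = v`, which are in bijection with the tuples `ỹ`. -/
def HGML.sat (H : RelHG V R ar) (c : V → C) : HGML R C ar → V → Prop
  | .color a, v => c v = a
  | .fnot φ, v => ¬ HGML.sat H c φ v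
  | .fand φ ψ, v => HGML.sat H c φ v ∧ HGML.sat H c ψ v
  | .count r i N _ Ψ, v =>
      ∃ s : Finset (Fin (ar r) → V),
        N ≤ s.card ∧ ∀ w ∈ s, w i = v ∧
          (⟨r, w⟩ : Σ r' : R, Fin (ar r') → V) ∈ H.edges ∧ BComb.sat H c Ψ w

/-- Satisfaction of a Boolean combination under an assignment `w` of the variables. -/
def BComb.sat (H : RelHG V R ar) (c : V → C) :
    {k : ℕ} → {i : Fin k} → BComb R C ar k i → (Fin k → V) → Prop
  | _, _, .atom j _ φ, w => HGML.sat H c φ (w j)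
  | _, _, .bnot Ψ, w => ¬ BComb.sat H c Ψ w
  | _, _, .band Ψ₁ Ψ₂, w => BComb.sat H c Ψ₁ w ∧ BComb.sat H c Ψ₂ w
end

/-- Formulas of the restricted fragment HGML_r: as HGML, except that in the counting
case the body is a conjunction `⋀_{j ≠ i} φ_j(y_j)` of HGML_r formulas, one per free
variable. -/
inductive HGMLr (R C : Type) (ar : R → ℕ) : Type where
  | color : C → HGMLr R C ar
  | fnot : HGMLr R C ar → HGMLr R C ar
  | fand : HGMLr R C ar → HGMLr R C ar → HGMLr R C ar
  | count : (r : R) → (i : Fin (ar r)) → (N : ℕ) → 1 ≤ N →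
      ((j : Fin (ar r)) → j ≠ i → HGMLr R C ar) → HGMLr R C ar

/-- Satisfaction of an HGML_r formula at a node of a relational hypergraph. -/
def HGMLr.sat (H : RelHG V R ar) (c : V → C) : HGMLr R C ar → V → Prop
  | .color a, v => c v = a
  | .fnot φ, v => ¬ HGMLr.sat H c φ v
  | .fand φ ψ, v => HGMLr.sat H c φ v ∧ HGMLr.sat H c ψ v
  | .count r i N _ Φ, v =>
      ∃ s : Finset (Fin (ar r) → V),
        N ≤ s.card ∧ ∀ w ∈ s, w i = v ∧
          (⟨r, w⟩ : Σ r' : R, Fin (ar r') → V) ∈ H.edges ∧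
          ∀ (j : Fin (ar r)) (hj : j ≠ i), HGMLr.sat H c (Φ j hj) (w j)

/-!
By induction on `φ`, the only non-trivial case being a counting formula
`∃^{≥N} ỹ (r(…, x, …) ∧ Ψ(ỹ))`. Let `φ₁(y_{j₁}), …, φₙ(y_{jₙ})` be the atoms of `Ψ`, with HGML_r
translations `φ'₁, …, φ'ₙ`. The truth values of the atoms at a tuple `ỹ` form its *type*
`t ∈ {0,1}ⁿ`; the type decides `Ψ(ỹ)`, and having type `t` is expressed by the HGML_r conjunction
`⋀_j χ_{t,j}(y_j)`, where `χ_{t,j}` collects the literals `±φ'ₚ` with `jₚ = j`. Distinct types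
are disjoint, so the number of tuples satisfying `Ψ` is the sum over the types `t` satisfying `Ψ`
of the numbers `n_t` of tuples of type `t`. Finally `N ≤ ∑ n_t` iff there are `g_t ≤ N` with
`N ≤ ∑ g_t` and `g_t ≤ n_t` for all `t`: a finite disjunction of conjunctions of HGML_r formulas
`∃^{≥g_t} ỹ (r(…, x, …) ∧ ⋀_j χ_{t,j}(y_j))`.
-/

open Finset

theorem le_sum_iff_exists_fin {ι : Type*} (s : Finset ι) (f : ι → ℕ) (N : ℕ) :
    N ≤ ∑ t ∈ s, f t ↔
      ∃ g : ι → Fin (N + 1), N ≤ ∑ t ∈ s, (g t : ℕ) ∧ ∀ t ∈ s, (g t : ℕ) ≤ f t := by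
  constructor
  · intro hN
    refine ⟨fun t => ⟨min (f t) N, Nat.lt_succ_of_le (min_le_right _ _)⟩, ?_,
      fun t _ => min_le_left _ _⟩
    by_cases hbig : ∃ t ∈ s, N ≤ f t
    · obtain ⟨t, ht, hNt⟩ := hbig
      calc N = min (f t) N := (min_eq_right hNt).symm
        _ ≤ ∑ t ∈ s, min (f t) N :=
          single_le_sum (f := fun t => min (f t) N) (fun _ _ => Nat.zero_le _) ht
    · simp only [not_exists, not_and, not_le] at hbig
      calc N ≤ ∑ t ∈ s, f t := hN
        _ = ∑ t ∈ s, min (f t) N := sum_congr rfl fun t ht => (min_eq_left (hbig t ht).le).symm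
  · rintro ⟨g, hN, hg⟩
    exact hN.trans (sum_le_sum hg)

theorem exists_le_card_subset_iff {α : Type*} (S : Finset α) (N : ℕ) :
    (∃ s : Finset α, N ≤ #s ∧ ∀ w ∈ s, w ∈ S) ↔ N ≤ #S :=
  ⟨fun ⟨_, hN, hs⟩ => hN.trans (card_le_card hs), fun hN => ⟨S, hN, fun _ => id⟩⟩

theorem card_filter_eq_sum_card_fiber {α β : Type*} [DecidableEq β] (s : Finset α) (f : α → β)
    (T : Finset β) (P : α → Prop) [DecidablePred P] (hP : ∀ x, P x ↔ f x ∈ T) :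
    #(s.filter P) = ∑ t ∈ T, #(s.filter fun x => f x = t) := by
  rw [card_eq_sum_card_fiberwise (f := f) (t := T) fun x hx => (hP x).1 (mem_filter.1 hx).2]
  refine sum_congr rfl fun t ht => ?_
  rw [filter_filter]
  exact congrArg card (filter_congr fun x _ => ⟨And.right, fun hx => ⟨(hP x).2 (hx ▸ ht), hx⟩⟩)

theorem HGML.nonempty_colors (φ : HGML R C ar) : Nonempty C := by
  induction φ using HGML.rec (motive_2 := fun _ _ _ => Nonempty C) <;>
    first | assumption | exact ⟨‹C›⟩

noncomputable def RelHG.tuplesAt [DecidableEq V] (H : RelHG V R ar) (r : R) (i : Fin (ar r))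
    (v : V) : Finset (Fin (ar r) → V) :=
  (H.edges.preimage (Sigma.mk r) sigma_mk_injective.injOn).filter fun w => w i = v

theorem RelHG.mem_tuplesAt [DecidableEq V] (H : RelHG V R ar) (r : R) (i : Fin (ar r)) (v : V)
    (w : Fin (ar r) → V) :
    w ∈ H.tuplesAt r i v ↔ w i = v ∧ (⟨r, w⟩ : Σ r' : R, Fin (ar r') → V) ∈ H.edges := by
  rw [RelHG.tuplesAt, mem_filter, mem_preimage, and_comm]

namespace HGMLr

def tt (a : C) : HGMLr R C ar := .fnot (.fand (.color a) (.fnot (.color a)))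

theorem sat_tt (H : RelHG V R ar) (c : V → C) (a : C) (v : V) :
    (tt a : HGMLr R C ar).sat H c v := by
  simp only [tt, sat]
  tauto

noncomputable def finAnd {ι : Type*} (a : C) (s : Finset ι) (f : ι → HGMLr R C ar) :
    HGMLr R C ar :=
  (s.toList.map f).foldr .fand (tt a)

theorem sat_finAnd {ι : Type*} (H : RelHG V R ar) (c : V → C) (a : C) (s : Finset ι)
    (f : ι → HGMLr R C ar) (v : V) :
    (finAnd a s f).sat H c v ↔ ∀ x ∈ s, (f x).sat H c v := by
  suffices ∀ l : List ι, ((l.map f).foldr .fand (tt a)).sat H c v ↔ ∀ x ∈ l, (f x).sat H c v by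
    simpa [finAnd] using this s.toList
  intro l
  induction l with
  | nil => simp [sat_tt]
  | cons x l ih => simp [sat, ih]

noncomputable def finOr {ι : Type*} (a : C) (s : Finset ι) (f : ι → HGMLr R C ar) :
    HGMLr R C ar :=
  .fnot (finAnd a s fun x => .fnot (f x))

theorem sat_finOr {ι : Type*} (H : RelHG V R ar) (c : V → C) (a : C) (s : Finset ι)
    (f : ι → HGMLr R C ar) (v : V) :
    (finOr a s f).sat H c v ↔ ∃ x ∈ s, (f x).sat H c v := by
  simp [finOr, sat, sat_finAnd]

/-- `∃^{≥m}`, also for `m = 0`. -/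
def atLeast (a : C) (r : R) (i : Fin (ar r)) (m : ℕ)
    (Φ : ∀ j : Fin (ar r), j ≠ i → HGMLr R C ar) : HGMLr R C ar :=
  if h : 1 ≤ m then .count r i m h Φ else tt a

theorem sat_atLeast [DecidableEq V] (H : RelHG V R ar) (c : V → C) (a : C) (r : R)
    (i : Fin (ar r)) (m : ℕ) (Φ : ∀ j : Fin (ar r), j ≠ i → HGMLr R C ar) (v : V)
    [DecidablePred fun w : Fin (ar r) → V => ∀ j (hj : j ≠ i), (Φ j hj).sat H c (w j)] :
    (atLeast a r i m Φ).sat H c v ↔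
      m ≤ #((H.tuplesAt r i v).filter fun w => ∀ j (hj : j ≠ i), (Φ j hj).sat H c (w j)) := by
  unfold atLeast
  split_ifs with hm
  · rw [sat, ← exists_le_card_subset_iff]
    simp only [mem_filter, RelHG.mem_tuplesAt, and_assoc]
  · simp only [sat_tt, true_iff]
    omega

end HGMLr

theorem HGML.sat_count_iff [DecidableEq V] (H : RelHG V R ar) (c : V → C) (r : R) (i : Fin (ar r))
    (N : ℕ) (hN : 1 ≤ N) (Ψ : BComb R C ar (ar r) i) (v : V)
    [DecidablePred (BComb.sat H c Ψ)] :
    (HGML.count r i N hN Ψ).sat H c v ↔ N ≤ #((H.tuplesAt r i v).filter (BComb.sat H c Ψ)) := by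
  rw [HGML.sat, ← exists_le_card_subset_iff]
  simp only [mem_filter, RelHG.mem_tuplesAt, and_assoc]

namespace BComb

def eval : {k : ℕ} → {i : Fin k} → (Fin k → HGML R C ar → Prop) → BComb R C ar k i → Prop
  | _, _, σ, .atom j _ φ => σ j φ
  | _, _, σ, .bnot Ψ => ¬ eval σ Ψ
  | _, _, σ, .band Ψ₁ Ψ₂ => eval σ Ψ₁ ∧ eval σ Ψ₂

def atoms : {k : ℕ} → {i : Fin k} → BComb R C ar k i → List (Fin k × HGML R C ar)
  | _, _, .atom j _ φ => [(j, φ)]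
  | _, _, .bnot Ψ => Ψ.atoms
  | _, _, .band Ψ₁ Ψ₂ => Ψ₁.atoms ++ Ψ₂.atoms

theorem ne_of_mem_atoms : ∀ {k : ℕ} {i : Fin k} (Ψ : BComb R C ar k i), ∀ x ∈ Ψ.atoms, x.1 ≠ i
  | _, _, .atom _ h _ => by simpa [atoms] using h
  | _, _, .bnot Ψ => Ψ.ne_of_mem_atoms
  | _, _, .band Ψ₁ Ψ₂ => by
      intro x hx
      rcases List.mem_append.1 hx with hx | hx
      · exact Ψ₁.ne_of_mem_atoms x hx
      · exact Ψ₂.ne_of_mem_atoms x hx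

theorem sat_iff_eval (H : RelHG V R ar) (c : V → C) :
    ∀ {k : ℕ} {i : Fin k} (Ψ : BComb R C ar k i) (w : Fin k → V) (σ : Fin k → HGML R C ar → Prop),
      (∀ x ∈ Ψ.atoms, σ x.1 x.2 ↔ HGML.sat H c x.2 (w x.1)) → (Ψ.sat H c w ↔ Ψ.eval σ)
  | _, _, .atom j _ φ, _, _, hσ => (hσ (j, φ) (List.mem_singleton_self _)).symm
  | _, _, .bnot Ψ, w, σ, hσ => not_congr (sat_iff_eval H c Ψ w σ hσ)
  | _, _, .band Ψ₁ Ψ₂, w, σ, hσ =>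
      and_congr (sat_iff_eval H c Ψ₁ w σ fun x hx => hσ x (List.mem_append_left _ hx))
        (sat_iff_eval H c Ψ₂ w σ fun x hx => hσ x (List.mem_append_right _ hx))

variable {k : ℕ} {i : Fin k}

abbrev Atom (Ψ : BComb R C ar k i) := {x : Fin k × HGML R C ar // x ∈ Ψ.atoms}

open Classical in
noncomputable def atomType (H : RelHG V R ar) (c : V → C) (Ψ : BComb R C ar k i) (w : Fin k → V) :
    Ψ.Atom → Bool :=
  fun x => decide (HGML.sat H c x.1.2 (w x.1.1))

def HoldsOnType (Ψ : BComb R C ar k i) (t : Ψ.Atom → Bool) : Prop :=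
  Ψ.eval fun j φ => ∃ h : (j, φ) ∈ Ψ.atoms, t ⟨(j, φ), h⟩

theorem sat_iff_holdsOnType (H : RelHG V R ar) (c : V → C) (Ψ : BComb R C ar k i) (w : Fin k → V) :
    Ψ.sat H c w ↔ Ψ.HoldsOnType (Ψ.atomType H c w) :=
  sat_iff_eval H c Ψ w _ fun x hx => by simp [atomType, hx]

open Classical in
noncomputable def typeFormula (a : C) (Ψ : BComb R C ar k i) (tr : Ψ.Atom → HGMLr R C ar)
    (t : Ψ.Atom → Bool) (j : Fin k) : HGMLr R C ar :=
  HGMLr.finAnd a (univ.filter fun x : Ψ.Atom => x.1.1 = j) fun x =>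
    if t x then tr x else .fnot (tr x)

theorem forall_sat_typeFormula_iff (H : RelHG V R ar) (c : V → C) (a : C) (Ψ : BComb R C ar k i)
    (tr : Ψ.Atom → HGMLr R C ar) (htr : ∀ x u, (tr x).sat H c u ↔ HGML.sat H c x.1.2 u)
    (t : Ψ.Atom → Bool) (w : Fin k → V) :
    (∀ j (_ : j ≠ i), (Ψ.typeFormula a tr t j).sat H c (w j)) ↔ Ψ.atomType H c w = t := by
  have hlit : ∀ x, (if t x then tr x else .fnot (tr x)).sat H c (w x.1.1) ↔
      Ψ.atomType H c w x = t x := by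
    intro x
    cases t x <;> simp [atomType, HGMLr.sat, htr]
  simp only [typeFormula, HGMLr.sat_finAnd, mem_filter, mem_univ, true_and, funext_iff]
  constructor
  · intro h x
    exact (hlit x).1 (h x.1.1 (Ψ.ne_of_mem_atoms x.1 x.2) x rfl)
  · rintro h j - x rfl
    exact (hlit x).2 (h x)

end BComb

def HGML.SemEquiv (φ : HGML R C ar) (φ' : HGMLr R C ar) : Prop :=
  ∀ (V : Type) (H : RelHG V R ar) (c : V → C) (v : V), φ.sat H c v ↔ φ'.sat H c v

theorem HGML.exists_semEquiv_count (a : C) (r : R) (i : Fin (ar r)) (N : ℕ) (hN : 1 ≤ N)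
    (Ψ : BComb R C ar (ar r) i) (ih : ∀ x ∈ Ψ.atoms, ∃ φ' : HGMLr R C ar, x.2.SemEquiv φ') :
    ∃ φ' : HGMLr R C ar, (HGML.count r i N hN Ψ).SemEquiv φ' := by
  classical
  choose tr htr using fun x : Ψ.Atom => ih x.1 x.2
  let good := univ.filter Ψ.HoldsOnType
  refine ⟨HGMLr.finOr a (univ.filter fun g : (Ψ.Atom → Bool) → Fin (N + 1) =>
    N ≤ ∑ t ∈ good, (g t : ℕ)) fun g => HGMLr.finAnd a good fun t =>
      HGMLr.atLeast a r i (g t) fun j _ => Ψ.typeFormula a tr t j, ?_⟩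
  intro V H c v
  have hcard : #((H.tuplesAt r i v).filter (BComb.sat H c Ψ)) =
      ∑ t ∈ good, #((H.tuplesAt r i v).filter fun w => Ψ.atomType H c w = t) :=
    card_filter_eq_sum_card_fiber _ _ _ _ fun w => by
      simp [good, BComb.sat_iff_holdsOnType]
  rw [HGML.sat_count_iff, hcard, le_sum_iff_exists_fin]
  simp only [HGMLr.sat_finOr, HGMLr.sat_finAnd, HGMLr.sat_atLeast, mem_filter, mem_univ, true_and,
    BComb.forall_sat_typeFormula_iff H c a Ψ tr fun x u => (htr x V H c u).symm]

theorem HGML.exists_semEquiv (a : C) (φ : HGML R C ar) : ∃ φ' : HGMLr R C ar, φ.SemEquiv φ' := by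
  induction φ using HGML.rec
    (motive_2 := fun _ _ Ψ => ∀ x ∈ Ψ.atoms, ∃ φ' : HGMLr R C ar, x.2.SemEquiv φ') with
  | color b => exact ⟨.color b, fun _ _ _ _ => Iff.rfl⟩
  | fnot φ ih =>
      obtain ⟨φ', h⟩ := ih
      exact ⟨.fnot φ', fun V H c v => not_congr (h V H c v)⟩
  | fand φ ψ ihφ ihψ =>
      obtain ⟨φ', hφ⟩ := ihφ
      obtain ⟨ψ', hψ⟩ := ihψ
      exact ⟨.fand φ' ψ', fun V H c v => and_congr (hφ V H c v) (hψ V H c v)⟩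
  | count r i N hN Ψ ih => exact exists_semEquiv_count a r i N hN Ψ ih
  | atom j _ φ ih x hx =>
      rw [BComb.atoms, List.mem_singleton] at hx
      exact hx ▸ ih
  | bnot Ψ ih x hx => exact ih x hx
  | band Ψ₁ Ψ₂ ih₁ ih₂ x hx =>
      rcases List.mem_append.1 hx with hx | hx
      exacts [ih₁ x hx, ih₂ x hx]

/-- Every HGML formula can be translated into an equivalent HGML_r
formula: over a fixed vocabulary of relation types `R` with arities `ar` and node
colors `C`, for every HGML formula `φ(x)` there is an HGML_r formula `φ'(x)` that is
satisfied by exactly the same nodes of every relational hypergraph. -/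
theorem hgml_to_hgmlr
    {R C : Type} [Fintype R] [Fintype C] {ar : R → ℕ} (har : ∀ r : R, 1 ≤ ar r)
    (φ : HGML R C ar) :
    ∃ φ' : HGMLr R C ar,
      ∀ (V : Type) [Fintype V] (H : RelHG V R ar) (c : V → C) (v : V),
        HGML.sat H c φ v ↔ HGMLr.sat H c φ' v := by
  obtain ⟨a⟩ := φ.nonempty_colors
  obtain ⟨φ', hφ'⟩ := φ.exists_semEquiv a
  exact ⟨φ', fun V _ => hφ' V⟩
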